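/- Cosine modulation theorem for the OFT: for integrable u : ℝ³ → 𝕆 and f₀ ∈ ℝ, the OFT of x ↦ u(x)·cos(2πf₀x₁) at (f₁,f₂,f₃) equals (U(f₁+f₀,f₂,f₃) + U(f₁−f₀,f₂,f₃))/2, where U is the OFT of u. -/

import Mathlib

noncomputable section
open MeasureTheory Real

/-- Octonions as the Cayley–Dickson double of the quaternions:
pairs of quaternions with the Cayley–Dickson product `omul`.
(The additive, scalar and topological structure is the product structure.) -/
abbrev Octonion : Type := Quaternion ℝ × Quaternion ℝ

/-- Cayley–Dickson multiplication of octonions. -/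
def omul (x y : Octonion) : Octonion :=
  (x.1 * y.1 - star y.2 * x.2, y.2 * x.1 + x.2 * star y.1)

/-- The octonion `1`. -/
def oone : Octonion := (1, 0)

/-- Octonion conjugation. -/
def oconj (x : Octonion) : Octonion := (star x.1, -x.2)

/-- Real part of an octonion. -/
def ore (x : Octonion) : ℝ := x.1.re

/-- `o · o*`, as a real number (its imaginary part vanishes). -/
def onormSq (x : Octonion) : ℝ := ore (omul x (oconj x))

/-- The octonion norm `|o| = √(o·o*)`. -/
def oabs (x : Octonion) : ℝ := Real.sqrt (onormSq x)

/-- Inverse of a (nonzero) octonion. -/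
def oinv (x : Octonion) : Octonion := (onormSq x)⁻¹ • oconj x

def e1 : Octonion := ((⟨0,1,0,0⟩ : Quaternion ℝ), 0)
def e2 : Octonion := ((⟨0,0,1,0⟩ : Quaternion ℝ), 0)
def e3 : Octonion := ((⟨0,0,0,1⟩ : Quaternion ℝ), 0)
def e4 : Octonion := (0, (⟨1,0,0,0⟩ : Quaternion ℝ))
def e5 : Octonion := (0, (⟨0,1,0,0⟩ : Quaternion ℝ))
def e6 : Octonion := (0, (⟨0,0,1,0⟩ : Quaternion ℝ))
def e7 : Octonion := (0, (⟨0,0,0,1⟩ : Quaternion ℝ))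

/-- Powers of an octonion (well defined since octonions are power-associative). -/
def opow (o : Octonion) : ℕ → Octonion
  | 0 => oone
  | n + 1 => omul o (opow o n)

/-- The octonion exponential `exp o = ∑ oᵏ/k!`. -/
def octExp (o : Octonion) : Octonion :=
  ∑' k : ℕ, ((k.factorial : ℝ)⁻¹) • opow o k

/-- The octonion Fourier transform of `u : ℝ³ → 𝕆`,
with octonion products evaluated left to right. -/
def OFT (u : ℝ × ℝ × ℝ → Octonion) (f : ℝ × ℝ × ℝ) : Octonion :=
  ∫ x : ℝ × ℝ × ℝ,
    omul (omul (omul (u x) (octExp ((-(2 * π * f.1 * x.1)) • e1)))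
        (octExp ((-(2 * π * f.2.1 * x.2.1)) • e2)))
      (octExp ((-(2 * π * f.2.2 * x.2.2)) • e4))

/-!
Since `e₁² = −1`, the octonion exponential satisfies Euler's formula
`exp (t e₁) = cos t + sin t · e₁`, hence the real identity
`cos s · exp (t e₁) = ½ (exp ((t − s) e₁) + exp ((t + s) e₁))`.
Real scalars pass through octonion products, which are `ℝ`-bilinear, so this identity survives the
remaining right multiplications by `exp (· e₂)`, `exp (· e₄)` and the integral. Euler's formula
also bounds the kernels, which makes every integrand integrable.
-/

lemma omul_add_left (x y z : Octonion) : omul (x + y) z = omul x z + omul y z := by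
  simp only [omul, Prod.fst_add, Prod.snd_add, Prod.mk_add_mk, mul_add, add_mul, Prod.mk.injEq]
  constructor <;> abel

lemma omul_add_right (x y z : Octonion) : omul x (y + z) = omul x y + omul x z := by
  simp only [omul, Prod.fst_add, Prod.snd_add, Prod.mk_add_mk, mul_add, add_mul, star_add,
    Prod.mk.injEq]
  constructor <;> abel

lemma omul_smul_left (r : ℝ) (x y : Octonion) : omul (r • x) y = r • omul x y := by
  simp [omul, Prod.smul_def, smul_sub, smul_add]

lemma omul_smul_right (r : ℝ) (x y : Octonion) : omul x (r • y) = r • omul x y := by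
  simp [omul, Prod.smul_def, smul_sub, smul_add]

lemma omul_oone (x : Octonion) : omul x oone = x := by
  simp [omul, oone]

def omulRight (b : Octonion) : Octonion →L[ℝ] Octonion :=
  LinearMap.toContinuousLinearMap
    { toFun := fun x => omul x b
      map_add' := fun x y => omul_add_left x y b
      map_smul' := fun r x => omul_smul_left r x b }

-- The quaternion literals in `e1`, `e2`, `e4` are elaborated with instances that `simp` cannot
-- unify with `Quaternion`'s reducibly, hence the `erw` and the closing `rfl`.
lemma e1_omul_self : omul e1 e1 = -oone := by
  ext <;> simp [omul, e1, oone] <;> erw [QuaternionAlgebra.mk_mul_mk] <;> norm_num <;> rfl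

lemma e2_omul_self : omul e2 e2 = -oone := by
  ext <;> simp [omul, e2, oone] <;> erw [QuaternionAlgebra.mk_mul_mk] <;> norm_num <;> rfl

lemma e4_omul_self : omul e4 e4 = -oone := by
  ext <;> simp [omul, e4, oone] <;> erw [QuaternionAlgebra.mk_mul_mk] <;> norm_num <;> rfl

section Exponential

variable {e : Octonion}

-- Only products of `t • e` with multiples of `oone` and `e` occur, so no associativity is needed.
lemma opow_smul_even_odd (he : omul e e = -oone) (t : ℝ) (n : ℕ) :
    opow (t • e) (2 * n) = ((-1) ^ n * t ^ (2 * n)) • oone ∧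
      opow (t • e) (2 * n + 1) = ((-1) ^ n * t ^ (2 * n + 1)) • e := by
  induction n with
  | zero => simp [opow, omul_oone]
  | succ n ih =>
    have heven : opow (t • e) (2 * (n + 1)) = ((-1) ^ (n + 1) * t ^ (2 * (n + 1))) • oone := by
      change omul (t • e) (opow (t • e) (2 * n + 1)) = _
      rw [ih.2, omul_smul_left, omul_smul_right, he, smul_smul, smul_neg, ← neg_smul]
      ring_nf
    refine ⟨heven, ?_⟩
    change omul (t • e) (opow (t • e) (2 * (n + 1))) = _
    rw [heven, omul_smul_left, omul_smul_right, omul_oone, smul_smul]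
    ring_nf

lemma octExp_smul (he : omul e e = -oone) (t : ℝ) :
    octExp (t • e) = Real.cos t • oone + Real.sin t • e := by
  refine HasSum.tsum_eq (HasSum.even_add_odd ?_ ?_)
  · convert (Real.hasSum_cos t).smul_const oone using 2 with n
    rw [(opow_smul_even_odd he t n).1, smul_smul]
    field_simp
  · convert (Real.hasSum_sin t).smul_const e using 2 with n
    rw [(opow_smul_even_odd he t n).2, smul_smul]
    field_simp

lemma omul_octExp_smul (he : omul e e = -oone) (x : Octonion) (t : ℝ) :
    omul x (octExp (t • e)) = Real.cos t • x + Real.sin t • omul x e := by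
  rw [octExp_smul he, omul_add_right, omul_smul_right, omul_smul_right, omul_oone]

lemma cos_smul_octExp_smul (he : omul e e = -oone) (s t : ℝ) :
    Real.cos s • octExp (t • e) = (2 : ℝ)⁻¹ • (octExp ((t - s) • e) + octExp ((t + s) • e)) := by
  simp only [octExp_smul he, Real.cos_sub, Real.cos_add, Real.sin_sub, Real.sin_add]
  module

lemma MeasureTheory.Integrable.omul_octExp_smul {α : Type*} [MeasurableSpace α] {μ : Measure α}
    {v : α → Octonion} (hv : Integrable v μ) (he : omul e e = -oone) {c : α → ℝ}
    (hc : Measurable c) : Integrable (fun x => omul (v x) (octExp (c x • e))) μ := by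
  simp only [_root_.omul_octExp_smul he]
  exact (hv.bdd_smul 1 (Real.measurable_cos.comp hc).aestronglyMeasurable
      (ae_of_all _ fun x => by simpa using Real.abs_cos_le_one (c x))).add
    (((omulRight e).integrable_comp hv).bdd_smul 1
      (Real.measurable_sin.comp hc).aestronglyMeasurable
      (ae_of_all _ fun x => by simpa using Real.abs_sin_le_one (c x)))

end Exponential

def oftIntegrand (u : ℝ × ℝ × ℝ → Octonion) (f x : ℝ × ℝ × ℝ) : Octonion :=
  omul (omul (omul (u x) (octExp ((-(2 * π * f.1 * x.1)) • e1)))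
      (octExp ((-(2 * π * f.2.1 * x.2.1)) • e2)))
    (octExp ((-(2 * π * f.2.2 * x.2.2)) • e4))

lemma OFT_eq_integral_oftIntegrand (u : ℝ × ℝ × ℝ → Octonion) (f : ℝ × ℝ × ℝ) :
    OFT u f = ∫ x, oftIntegrand u f x := rfl

lemma integrable_oftIntegrand {u : ℝ × ℝ × ℝ → Octonion} (hu : Integrable u)
    (f : ℝ × ℝ × ℝ) : Integrable (oftIntegrand u f) :=
  ((hu.omul_octExp_smul e1_omul_self (by fun_prop)).omul_octExp_smul e2_omul_self
    (by fun_prop)).omul_octExp_smul e4_omul_self (by fun_prop)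

lemma oftIntegrand_cos_smul (u : ℝ × ℝ × ℝ → Octonion) (f₀ f₁ f₂ f₃ : ℝ) (x : ℝ × ℝ × ℝ) :
    oftIntegrand (fun x => Real.cos (2 * π * f₀ * x.1) • u x) (f₁, f₂, f₃) x =
      (2 : ℝ)⁻¹ • (oftIntegrand u (f₁ + f₀, f₂, f₃) x + oftIntegrand u (f₁ - f₀, f₂, f₃) x) := by
  have hplus : -(2 * π * (f₁ + f₀) * x.1) = -(2 * π * f₁ * x.1) - 2 * π * f₀ * x.1 := by ring
  have hminus : -(2 * π * (f₁ - f₀) * x.1) = -(2 * π * f₁ * x.1) + 2 * π * f₀ * x.1 := by ring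
  simp only [oftIntegrand]
  rw [omul_smul_left, ← omul_smul_right, cos_smul_octExp_smul e1_omul_self, hplus, hminus,
    omul_smul_right, omul_add_right]
  simp only [omul_smul_left, omul_add_left]

theorem OFT_cosine_modulation (u : ℝ × ℝ × ℝ → Octonion) (hu : Integrable u)
    (f₀ f₁ f₂ f₃ : ℝ) :
    OFT (fun x => Real.cos (2 * π * f₀ * x.1) • u x) (f₁, f₂, f₃) =
      (2 : ℝ)⁻¹ • (OFT u (f₁ + f₀, f₂, f₃) + OFT u (f₁ - f₀, f₂, f₃)) := by
  simp only [OFT_eq_integral_oftIntegrand, oftIntegrand_cos_smul]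
  rw [integral_smul, integral_add (integrable_oftIntegrand hu _) (integrable_oftIntegrand hu _)]
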